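/- The discriminant 𝒟_m(b) of D_m(λ, b) with respect to λ is a polynomial in b of degree m(m+1). -/

import Mathlib

open Polynomial

noncomputable def Mmat (m : ℕ) (b : ℂ) : Matrix (Fin (m + 1)) (Fin (m + 1)) ℂ :=
  Matrix.of fun i j =>
    if (i : ℕ) = (j : ℕ) then (4 * ((i : ℕ) : ℂ) + 1) * b
    else if (i : ℕ) = (j : ℕ) + 1 then -((2 * ((i : ℕ) : ℂ) - 1) * (2 * ((i : ℕ) : ℂ)))
    else if (j : ℕ) = (i : ℕ) + 1 then 4 * ((i : ℕ) : ℂ) - 4 * (m : ℂ)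
    else 0

/-- 𝒟_m(b), the discriminant of D_m(λ,b) = det(λI − M_m(b)) with respect to λ,
computed as ∏ over roots r of the characteristic polynomial of its derivative at r. -/
noncomputable def discD (m : ℕ) (b : ℂ) : ℂ :=
  (((Mmat m b).charpoly.roots).map fun r => ((Mmat m b).charpoly.derivative).eval r).prod

/-!
For monic `p`, the product of `p'` over the roots of `p` is the resultant `Res(p, p')`. Over
`ℂ[b]` this resultant commutes with specialising `b`, so `𝒟_m` is a polynomial `P`. Write
`M_m(b) = b • Δ + E` with `Δ` diagonal with the distinct entries `4i+1`. For `b ≠ 0`,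
`M_m(b) = b • (Δ + b⁻¹ • E)`, and the discriminant of an `n × n` matrix is homogeneous of degree
`n(n-1)` under scaling, so `P(b) = b ^ (m(m+1)) Q(b⁻¹)` where `Q(c)` is the discriminant of
`Δ + c • E`. Since `Q(0)`, the discriminant of `Δ`, is nonzero, `P` has degree exactly `m(m+1)`.
-/

namespace Polynomial

theorem prod_roots_eval_derivative_eq_resultant {R : Type*} [CommRing R] [IsDomain R] {p : R[X]}
    (hp : p.Monic) (hs : p.Splits) :
    (p.roots.map fun r => p.derivative.eval r).prod = resultant p p.derivative := by
  rw [resultant_eq_prod_eval p p.derivative _ le_rfl hs, hp.leadingCoeff, one_pow, one_mul]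

theorem derivative_scaleRoots {R : Type*} [CommSemiring R] [IsAddTorsionFree R] (p : R[X]) (s : R) :
    (p.scaleRoots s).derivative = p.derivative.scaleRoots s := by
  ext i
  simp only [coeff_derivative, coeff_scaleRoots, natDegree_derivative]
  rw [Nat.sub_sub, add_comm 1 i]
  ring

theorem eval_reverse {K : Type*} [Field K] (p : K[X]) {b : K} (hb : b ≠ 0) :
    p.reverse.eval b = b ^ p.natDegree * p.eval b⁻¹ := by
  have : Invertible b⁻¹ := invertibleOfNonzero (inv_ne_zero hb)
  have h := eval₂_reverse_mul_pow (RingHom.id K) b⁻¹ p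
  rw [invOf_eq_inv, inv_inv, ← eval, ← eval] at h
  rw [← h, inv_pow]
  field_simp

theorem natDegree_eq_of_eval_eq_pow_mul_eval_inv {K : Type*} [Field K] [Infinite K]
    {P Q : K[X]} {k : ℕ} (hQ : Q.eval 0 ≠ 0) (h : ∀ b ≠ 0, P.eval b = b ^ k * Q.eval b⁻¹) :
    P.natDegree = k := by
  have hQ0 : Q ≠ 0 := by rintro rfl; simp at hQ
  -- `Q.natDegree ≤ k` is not known in advance, so clear `b⁻¹` with `Q.natDegree`, not with `k`.
  have hrev : X ^ Q.natDegree * P = X ^ k * Q.reverse := by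
    refine eq_of_infinite_eval_eq _ _ ((Set.finite_singleton 0).infinite_compl.mono fun b hb => ?_)
    simp only [Set.mem_compl_iff, Set.mem_singleton_iff] at hb
    simp only [Set.mem_ofPred_eq, eval_mul, eval_pow, eval_X, h b hb, eval_reverse Q hb]
    ring
  have hrevdeg : Q.reverse.natDegree = Q.natDegree := by
    have hcoeff : Q.coeff 0 ≠ 0 := by rwa [coeff_zero_eq_eval_zero]
    rw [reverse_natDegree, natTrailingDegree_eq_zero.mpr (Or.inr hcoeff), Nat.sub_zero]
  have hrev0 : Q.reverse ≠ 0 := by rwa [Ne, reverse_eq_zero]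
  have hP0 : P ≠ 0 := by
    rintro rfl
    simp [hrev0] at hrev
  have := congrArg natDegree hrev
  rw [natDegree_mul (by simp) hP0, natDegree_mul (by simp) hrev0, natDegree_X_pow,
    natDegree_X_pow, hrevdeg] at this
  omega

end Polynomial

namespace Matrix

variable {K ι : Type*} [Field K] [Fintype ι] [DecidableEq ι]

theorem separable_charpoly_diagonal_iff (d : ι → K) :
    (diagonal d).charpoly.Separable ↔ Function.Injective d := by
  rw [charpoly_diagonal, separable_prod_X_sub_C_iff]

theorem charpoly_smul_eq_scaleRoots [Infinite K] (A : Matrix ι ι K) {c : K} (hc : c ≠ 0) :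
    (c • A).charpoly = A.charpoly.scaleRoots c := by
  refine Polynomial.funext fun t => ?_
  obtain ⟨s, rfl⟩ : ∃ s, t = c * s := ⟨c⁻¹ * t, by field_simp⟩
  rw [scaleRoots_eval_mul, eval_charpoly, eval_charpoly, charpoly_natDegree_eq_dim,
    ← det_smul, smul_sub]
  congr 2
  ext i j
  by_cases hij : i = j <;> simp [hij]

variable [CharZero K]

theorem resultant_charpoly_smul (A : Matrix ι ι K) {c : K} (hc : c ≠ 0) :
    resultant (c • A).charpoly (c • A).charpoly.derivative =
      c ^ (Fintype.card ι * (Fintype.card ι - 1)) *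
        resultant A.charpoly A.charpoly.derivative := by
  rw [charpoly_smul_eq_scaleRoots A hc, derivative_scaleRoots, resultant_scaleRoots,
    natDegree_derivative, charpoly_natDegree_eq_dim]

theorem exists_eval_eq_resultant_charpoly_smul_add (D E : Matrix ι ι K) :
    ∃ P : K[X], ∀ b : K,
      P.eval b = resultant (b • D + E).charpoly (b • D + E).charpoly.derivative := by
  set N : Matrix ι ι K[X] := (X : K[X]) • D.map C + E.map C
  refine ⟨resultant N.charpoly N.charpoly.derivative, fun b => ?_⟩
  have hN : N.map (evalRingHom b) = b • D + E := by
    ext i j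
    simp [N, mul_comm b]
  -- The size arguments of `resultant` survive specialisation: the charpoly is monic and, in
  -- characteristic zero, its derivative has degree exactly one less.
  have hdeg : (N.charpoly.map (evalRingHom b)).natDegree = N.charpoly.natDegree :=
    (charpoly_monic N).natDegree_map _
  rw [← hN, charpoly_map, derivative_map, ← coe_evalRingHom, ← resultant_map_map,
    natDegree_derivative, ← derivative_map, natDegree_derivative, hdeg]

theorem exists_natDegree_eq_resultant_charpoly_smul_add (D E : Matrix ι ι K)
    (hD : D.charpoly.Separable) :
    ∃ P : K[X], (∀ b : K,
      P.eval b = resultant (b • D + E).charpoly (b • D + E).charpoly.derivative) ∧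
      P.natDegree = Fintype.card ι * (Fintype.card ι - 1) := by
  obtain ⟨P, hP⟩ := exists_eval_eq_resultant_charpoly_smul_add D E
  obtain ⟨Q, hQ⟩ := exists_eval_eq_resultant_charpoly_smul_add E D
  refine ⟨P, hP, natDegree_eq_of_eval_eq_pow_mul_eval_inv (Q := Q) ?_ fun b hb => ?_⟩
  · rw [hQ, zero_smul, zero_add]
    exact resultant_ne_zero _ _ hD
  · rw [hP, hQ, ← resultant_charpoly_smul _ hb, smul_add, smul_smul, mul_inv_cancel₀ hb,
      one_smul, add_comm]

end Matrix

theorem Mmat_eq_smul_diagonal_add (m : ℕ) (b : ℂ) :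
    Mmat m b =
      b • Matrix.diagonal (fun i : Fin (m + 1) => 4 * ((i : ℕ) : ℂ) + 1) + Mmat m 0 := by
  ext i j
  by_cases hij : i = j
  · subst hij
    simp [Mmat, mul_comm]
  · have hij' : (i : ℕ) ≠ j := Fin.val_ne_of_ne hij
    simp [Mmat, hij, hij']

/-- 𝒟_m(b) is a polynomial in b of degree m(m+1). -/
theorem stmt8 (m : ℕ) :
    ∃ P : Polynomial ℂ, (∀ b : ℂ, P.eval b = discD m b) ∧ P.natDegree = m * (m + 1) := by
  have hΔ : Function.Injective fun i : Fin (m + 1) => 4 * ((i : ℕ) : ℂ) + 1 :=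
    fun i j hij => by simpa [Fin.ext_iff] using hij
  obtain ⟨P, hP, hdeg⟩ := Matrix.exists_natDegree_eq_resultant_charpoly_smul_add _ (Mmat m 0)
    ((Matrix.separable_charpoly_diagonal_iff _).mpr hΔ)
  refine ⟨P, fun b => ?_, ?_⟩
  · rw [hP, discD, ← Mmat_eq_smul_diagonal_add, prod_roots_eval_derivative_eq_resultant
      (Matrix.charpoly_monic _) (IsAlgClosed.splits _)]
  · rw [hdeg, Fintype.card_fin, Nat.add_sub_cancel, mul_comm]
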